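/- arXiv:1809.10978 — 3 statements merged into one kernel-verified Lean document; each statement's English description precedes it below -/
import Mathlib

section
/- Let g ≥ 1 and let b₁ ≤ … ≤ b_g be nonnegative real numbers satisfying ∑_{i=1}^{g} (b_g − b_i) ≤ 4. Then the minimum of Q(x) = 2∑_{i=1}^g x_i² + ∑_{i=1}^g b_i x_i over the standard simplex {x ∈ ℝ^g : x_i ≥ 0, ∑ x_i = 1} equals (1/(8g))·(4 + ∑_{i=1}^g b_i)² − (1/8)·∑_{i=1}^g b_i². -/
open Finset

/-!
On the hyperplane `∑ x_i = 1` the objective `Q(x) = 2∑ x_i² + ∑ b_i x_i` equals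
`Q(c) + 2∑ (x_i − c_i)²`, where `c_i = (L − b_i)/4` is its critical point, the Lagrange multiplier
`L = (4 + ∑ b_i)/g` being fixed by `∑ c_i = 1`. Hence `Q(c)` is the minimum over the simplex as soon
as `c ≥ 0`, i.e. `b_i ≤ L` for all `i`, which for increasing `b` is the hypothesis `∑ (b_g − b_i) ≤ 4`.
-/

namespace SimplexQuadratic

variable {ι : Type*} [Fintype ι]

def objective (b x : ι → ℝ) : ℝ := 2 * ∑ i, x i ^ 2 + ∑ i, b i * x i

noncomputable def multiplier (b : ι → ℝ) : ℝ := (4 + ∑ i, b i) / Fintype.card ι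

noncomputable def criticalPoint (b : ι → ℝ) (i : ι) : ℝ := (multiplier b - b i) / 4

theorem objective_eq_add_sum_sq_sub {b x y : ι → ℝ} {L : ℝ} (hy : ∀ i, 4 * y i + b i = L)
    (hsum : ∑ i, x i = ∑ i, y i) :
    objective b x = objective b y + 2 * ∑ i, (x i - y i) ^ 2 := by
  have hlin : ∑ i, (4 * y i + b i) * (x i - y i) = 0 := by
    simp only [hy, ← mul_sum, sum_sub_distrib, hsum, sub_self, mul_zero]
  have hterm : ∀ i, 2 * x i ^ 2 + b i * x i =
      2 * y i ^ 2 + b i * y i + 2 * (x i - y i) ^ 2 + (4 * y i + b i) * (x i - y i) :=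
    fun i => by ring
  simp only [objective, mul_sum, ← sum_add_distrib, hterm]
  simp only [sum_add_distrib, hlin, add_zero]

variable [Nonempty ι]

theorem card_mul_multiplier (b : ι → ℝ) :
    (Fintype.card ι : ℝ) * multiplier b = 4 + ∑ i, b i := by
  rw [multiplier, mul_div_cancel₀ _ (Nat.cast_ne_zero.mpr Fintype.card_ne_zero)]

theorem sum_criticalPoint (b : ι → ℝ) : ∑ i, criticalPoint b i = 1 := by
  simp only [criticalPoint, ← sum_div, sum_sub_distrib, sum_const, card_univ, nsmul_eq_mul,
    card_mul_multiplier]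
  ring

theorem objective_criticalPoint (b : ι → ℝ) :
    objective b (criticalPoint b) =
      (1 / (8 * (Fintype.card ι : ℝ))) * (4 + ∑ i, b i) ^ 2 - (1 / 8) * ∑ i, b i ^ 2 := by
  have hcard : (Fintype.card ι : ℝ) ≠ 0 := Nat.cast_ne_zero.mpr Fintype.card_ne_zero
  have hterm : ∀ i, 2 * criticalPoint b i ^ 2 + b i * criticalPoint b i =
      (multiplier b ^ 2 - b i ^ 2) / 8 := fun i => by simp only [criticalPoint]; ring
  calc objective b (criticalPoint b)
      = ∑ i, (multiplier b ^ 2 - b i ^ 2) / 8 := by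
        simp only [objective, mul_sum, ← sum_add_distrib, hterm]
    _ = (Fintype.card ι * multiplier b) ^ 2 / (8 * Fintype.card ι) - (1 / 8) * ∑ i, b i ^ 2 := by
        simp only [← sum_div, sum_sub_distrib, sum_const, card_univ, nsmul_eq_mul]
        field_simp
    _ = _ := by rw [card_mul_multiplier]; ring

theorem isLeast_objective_simplex {b : ι → ℝ} (hb : ∀ i, b i ≤ multiplier b) :
    IsLeast {y : ℝ | ∃ x : ι → ℝ, (∀ i, 0 ≤ x i) ∧ (∑ i, x i = 1) ∧ y = objective b x}
      ((1 / (8 * (Fintype.card ι : ℝ))) * (4 + ∑ i, b i) ^ 2 - (1 / 8) * ∑ i, b i ^ 2) := by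
  have hcrit : ∀ i, 4 * criticalPoint b i + b i = multiplier b :=
    fun i => by simp only [criticalPoint]; ring
  rw [← objective_criticalPoint]
  refine ⟨⟨criticalPoint b, fun i => div_nonneg (sub_nonneg.mpr (hb i)) (by norm_num),
    sum_criticalPoint b, rfl⟩, ?_⟩
  rintro y ⟨x, -, hx, rfl⟩
  rw [objective_eq_add_sum_sq_sub hcrit (hx.trans (sum_criticalPoint b).symm)]
  exact le_add_of_nonneg_right (mul_nonneg zero_le_two (sum_nonneg fun i _ => sq_nonneg _))

end SimplexQuadratic

open SimplexQuadratic in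
/-- If `b₁ ≤ … ≤ b_g ≥ 0` with `∑ (b_g − b_i) ≤ 4`, the minimum of
`Q(x) = 2∑ x_i² + ∑ b_i x_i` over the standard simplex equals
`(1/(8g))(4 + ∑ b_i)² − (1/8)∑ b_i²`. -/
theorem stmt3 (g : ℕ) (hg : 0 < g) (b : Fin g → ℝ)
    (hmono : Monotone b)
    (hsum : ∑ i, (b ⟨g - 1, by omega⟩ - b i) ≤ 4) :
    IsLeast
      {y : ℝ | ∃ x : Fin g → ℝ, (∀ i, 0 ≤ x i) ∧ (∑ i, x i = 1) ∧
        y = 2 * ∑ i, x i ^ 2 + ∑ i, b i * x i}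
      ((1 / (8 * (g : ℝ))) * (4 + ∑ i, b i) ^ 2 - (1 / 8) * ∑ i, b i ^ 2) := by
  have : Nonempty (Fin g) := ⟨⟨0, hg⟩⟩
  have hlast : g * b ⟨g - 1, by omega⟩ ≤ 4 + ∑ i, b i := by
    simpa [sum_sub_distrib] using hsum
  have hb : ∀ i, b i ≤ multiplier b := fun i => by
    rw [multiplier, Fintype.card_fin, le_div_iff₀ (by exact_mod_cast hg)]
    have : b i ≤ b ⟨g - 1, by omega⟩ := hmono (Fin.mk_le_mk.mpr (by omega))
    nlinarith
  simpa [objective] using isLeast_objective_simplex hb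
end

section
/- The minimum of 2(m₁² + m₂² + m₃²) + m₃ over all (m₁, m₂, m₃) with m₁ + m₂ + m₃ = 1 and m₁ ≥ m₂ ≥ m₃ ≥ 0 equals 11/12. -/
theorem two_mul_sum_sq_add_eq_of_add_add_eq_one {m₁ m₂ m₃ : ℝ} (h : m₁ + m₂ + m₃ = 1) :
    2 * (m₁ ^ 2 + m₂ ^ 2 + m₃ ^ 2) + m₃ = 11 / 12 + (m₁ - m₂) ^ 2 + 3 * (m₃ - 1 / 6) ^ 2 := by
  obtain rfl : m₁ = 1 - m₂ - m₃ := by linarith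
  ring

/-- The minimum of `2(m₁²+m₂²+m₃²)+m₃` over the ordered 3-simplex is `11/12`. -/
theorem stmt6 :
    IsLeast
      {y : ℝ | ∃ m₁ m₂ m₃ : ℝ, m₁ + m₂ + m₃ = 1 ∧ m₂ ≤ m₁ ∧ m₃ ≤ m₂ ∧ 0 ≤ m₃ ∧
        y = 2 * (m₁ ^ 2 + m₂ ^ 2 + m₃ ^ 2) + m₃}
      (11 / 12) := by
  constructor
  · exact ⟨5 / 12, 5 / 12, 1 / 6, by norm_num, le_rfl, by norm_num, by norm_num, by norm_num⟩
  · rintro y ⟨m₁, m₂, m₃, hsum, -, -, -, rfl⟩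
    rw [two_mul_sum_sq_add_eq_of_add_add_eq_one hsum]
    have := sq_nonneg (m₁ - m₂)
    have := sq_nonneg (m₃ - 1 / 6)
    linarith
end

section
/- The minimum of 2(m₁² + m₂² + m₃² + m₄²) + m₄ over all (m₁, m₂, m₃, m₄) with m₁ + m₂ + m₃ + m₄ = 1 and m₁ ≥ m₂ ≥ m₃ ≥ m₄ ≥ 0 equals 21/32. -/
/-! With `t = m₄`, the quadratic-mean inequality gives `m₁² + m₂² + m₃² ≥ (1 - t)² / 3`, and
the resulting one-variable quadratic `2(1 - t)²/3 + 2t² + t` equals `21/32 + (8/3)(t - 1/16)²`.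
Equality holds at `m₁ = m₂ = m₃ = 5/16`, `m₄ = 1/16`, which lies in the ordered simplex. -/

lemma sq_add_add_le_three_mul_sum_sq (a b c : ℝ) :
    (a + b + c) ^ 2 ≤ 3 * (a ^ 2 + b ^ 2 + c ^ 2) := by
  nlinarith [sq_nonneg (a - b), sq_nonneg (b - c), sq_nonneg (a - c)]

lemma twentyOne_div_thirtyTwo_le_quadratic (t : ℝ) :
    21 / 32 ≤ 2 * (1 - t) ^ 2 / 3 + 2 * t ^ 2 + t := by
  have h : 2 * (1 - t) ^ 2 / 3 + 2 * t ^ 2 + t = 21 / 32 + 8 / 3 * (t - 1 / 16) ^ 2 := by ring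
  rw [h]
  exact le_add_of_nonneg_right (by positivity)

/-- The minimum of `2(m₁²+m₂²+m₃²+m₄²)+m₄` over the ordered 4-simplex is `21/32`. -/
theorem stmt7 :
    IsLeast
      {y : ℝ | ∃ m₁ m₂ m₃ m₄ : ℝ, m₁ + m₂ + m₃ + m₄ = 1 ∧
        m₂ ≤ m₁ ∧ m₃ ≤ m₂ ∧ m₄ ≤ m₃ ∧ 0 ≤ m₄ ∧
        y = 2 * (m₁ ^ 2 + m₂ ^ 2 + m₃ ^ 2 + m₄ ^ 2) + m₄}
      (21 / 32) := by
  refine ⟨⟨5 / 16, 5 / 16, 5 / 16, 1 / 16, by norm_num⟩, ?_⟩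
  rintro y ⟨m₁, m₂, m₃, m₄, hsum, -, -, -, -, rfl⟩
  have hqm := sq_add_add_le_three_mul_sum_sq m₁ m₂ m₃
  rw [show m₁ + m₂ + m₃ = 1 - m₄ by linarith] at hqm
  calc (21 : ℝ) / 32 ≤ 2 * (1 - m₄) ^ 2 / 3 + 2 * m₄ ^ 2 + m₄ :=
        twentyOne_div_thirtyTwo_le_quadratic m₄
    _ ≤ 2 * (m₁ ^ 2 + m₂ ^ 2 + m₃ ^ 2 + m₄ ^ 2) + m₄ := by linarith
end
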